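/- Let X be a birth-and-death chain on {0,...,n} with symmetric kernel (birth probability p_i from i to i+1 equals death probability from i+1 to i, arbitrary holding) started at 0, and let U be the uniform chain started at 0. If p₀ ≤ 1/2, then the cdfs satisfy Π_t(i) ≥ Σ_t(i) for all times t and all states i, where Π_t(i) = P(X_t ≤ i) and Σ_t(i) = P(U_t ≤ i). -/
import Mathlib


open Finset

/-- Symmetric birth-and-death kernel on `{0,...,n}` with edge probabilities
`K(i,i+1) = K(i+1,i) = p i` and holding probabilities making rows sum to 1. -/
noncomputable def bdK (n : ℕ) (p : ℕ → ℝ) : Matrix (Fin (n + 1)) (Fin (n + 1)) ℝ :=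
  Matrix.of fun i j =>
    if (j : ℕ) = (i : ℕ) + 1 then p i
    else if (i : ℕ) = (j : ℕ) + 1 then p j
    else if i = j then
      1 - (if (i : ℕ) < n then p i else 0) - (if (i : ℕ) = 0 then 0 else p ((i : ℕ) - 1))
    else 0

/-- pmf at time `t` of the chain with kernel `bdK n p` started at state `0`. -/
noncomputable def chainPmf (n : ℕ) (p : ℕ → ℝ) (t : ℕ) : Fin (n + 1) → ℝ :=
  Matrix.vecMul (fun j => if j = 0 then (1 : ℝ) else 0) (bdK n p ^ t)

noncomputable def phat (n : ℕ) (p : ℕ → ℝ) : ℤ → ℝ :=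
  fun i => if 0 ≤ i ∧ i < (n : ℤ) then p i.toNat else 0
noncomputable def Phi (n : ℕ) (p : ℕ → ℝ) (t : ℕ) (i : ℤ) : ℝ :=
  ∑ j ∈ Finset.univ.filter (fun j : Fin (n+1) => (j : ℤ) ≤ i), chainPmf n p t j

lemma bdK_decomp (n : ℕ) (p : ℕ → ℝ) (k j : Fin (n+1)) :
    bdK n p k j =
      (if (j:ℕ) = (k:ℕ)+1 then p k else 0) +
      (if (j:ℕ)+1 = (k:ℕ) then p ((k:ℕ)-1) else 0) +
      (if (j:ℕ) = (k:ℕ) then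
        (1 - (if (k:ℕ) < n then p k else 0) - (if (k:ℕ) = 0 then 0 else p ((k:ℕ)-1))) else 0) := by
  simp only [bdK, Matrix.of_apply, Fin.ext_iff]
  split_ifs
  all_goals try (exfalso; omega)
  all_goals try ring
  all_goals rw [show ((j:ℕ)) = (k:ℕ)-1 by omega]

lemma sum_ite_val (n : ℕ) (m : ℕ) (c : ℝ) :
    (∑ j : Fin (n+1), if (j:ℕ) = m then c else 0) = if m ≤ n then c else 0 := by
  by_cases h : m ≤ n
  · rw [if_pos h, Finset.sum_eq_single (⟨m, by omega⟩ : Fin (n+1))]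
    · simp
    · intro b _ hb
      rw [if_neg]
      simpa [Fin.ext_iff] using hb
    · simp
  · rw [if_neg h]
    apply Finset.sum_eq_zero
    intro j _
    rw [if_neg]
    have := j.isLt
    omega

lemma sum_filter_piece (n : ℕ) (i : ℤ) (m : ℕ) (c : ℝ) :
    (∑ j : Fin (n+1), if (j:ℤ) ≤ i then (if (j:ℕ) = m then c else 0) else 0)
      = if m ≤ n ∧ (m:ℤ) ≤ i then c else 0 := by
  have h1 : ∀ j : Fin (n+1), (if (j:ℤ) ≤ i then (if (j:ℕ) = m then c else 0) else 0)
      = (if (j:ℕ) = m then (if (m:ℤ) ≤ i then c else 0) else 0) := by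
    intro j
    split_ifs <;> first | rfl | (exfalso; omega)
  rw [Finset.sum_congr rfl (fun j _ => h1 j), sum_ite_val]
  split_ifs <;> first | rfl | (exfalso; omega)

lemma sum_filter_piece2 (n : ℕ) (i : ℤ) (k : ℕ) (c : ℝ) :
    (∑ j : Fin (n+1), if (j:ℤ) ≤ i then (if (j:ℕ)+1 = k then c else 0) else 0)
      = if 1 ≤ k ∧ k-1 ≤ n ∧ ((k:ℤ)-1) ≤ i then c else 0 := by
  by_cases hk : 1 ≤ k
  · have h1 : ∀ j : Fin (n+1), (if (j:ℤ) ≤ i then (if (j:ℕ)+1 = k then c else 0) else 0)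
        = (if (j:ℤ) ≤ i then (if (j:ℕ) = k-1 then c else 0) else 0) := by
      intro j
      split_ifs <;> first | rfl | (exfalso; omega)
    rw [Finset.sum_congr rfl (fun j _ => h1 j), sum_filter_piece]
    split_ifs <;> first | rfl | (exfalso; omega)
  · rw [if_neg (by omega)]
    apply Finset.sum_eq_zero
    intro j _
    split_ifs <;> first | rfl | (exfalso; omega)

lemma rowPartial (n : ℕ) (p : ℕ → ℝ) (k : Fin (n+1)) (i : ℤ) :
    ∑ j ∈ Finset.univ.filter (fun j : Fin (n+1) => (j:ℤ) ≤ i), bdK n p k j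
    = (if (k:ℤ) ≤ i then 1 else 0)
      + (if (k:ℤ) = i+1 then phat n p i else 0)
      - (if (k:ℤ) = i then phat n p i else 0) := by
  rw [Finset.sum_filter]
  have h1 : ∀ j : Fin (n+1), (if (j:ℤ) ≤ i then bdK n p k j else 0)
      = (if (j:ℤ) ≤ i then (if (j:ℕ) = (k:ℕ)+1 then p k else 0) else 0)
      + (if (j:ℤ) ≤ i then (if (j:ℕ)+1 = (k:ℕ) then p ((k:ℕ)-1) else 0) else 0)
      + (if (j:ℤ) ≤ i then (if (j:ℕ) = (k:ℕ) then
          (1 - (if (k:ℕ) < n then p k else 0) - (if (k:ℕ) = 0 then 0 else p ((k:ℕ)-1))) else 0) else 0) := by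
    intro j
    rw [bdK_decomp n p k j]
    split_ifs <;> ring
  rw [Finset.sum_congr rfl (fun j _ => h1 j), Finset.sum_add_distrib, Finset.sum_add_distrib,
    sum_filter_piece, sum_filter_piece2, sum_filter_piece]
  have hkn : (k:ℕ) ≤ n := by omega
  rcases lt_trichotomy ((k:ℤ)) i with h | h | h
  · rw [if_pos (le_of_lt h), if_neg (show ¬((k:ℤ) = i+1) by omega),
        if_neg (show ¬((k:ℤ) = i) by omega)]
    split_ifs
    all_goals try (exfalso; omega)
    all_goals ring
  · rw [if_pos (le_of_eq h), if_neg (show ¬((k:ℤ) = i+1) by omega), if_pos h]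
    simp only [phat]
    rw [show i.toNat = (k:ℕ) by omega]
    split_ifs
    all_goals try (exfalso; omega)
    all_goals ring
  · by_cases h2 : (k:ℤ) = i+1
    · rw [if_neg (show ¬((k:ℤ) ≤ i) by omega), if_pos h2,
          if_neg (show ¬((k:ℤ) = i) by omega)]
      simp only [phat]
      rw [show i.toNat = (k:ℕ)-1 by omega]
      split_ifs
      all_goals try (exfalso; omega)
      all_goals ring
    · rw [if_neg (show ¬((k:ℤ) ≤ i) by omega), if_neg h2,
          if_neg (show ¬((k:ℤ) = i) by omega)]
      split_ifs
      all_goals try (exfalso; omega)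
      all_goals ring

lemma chainPmf_succ (n : ℕ) (p : ℕ → ℝ) (t : ℕ) (j : Fin (n+1)) :
    chainPmf n p (t+1) j = ∑ k : Fin (n+1), chainPmf n p t k * bdK n p k j := by
  simp only [chainPmf, pow_succ, ← Matrix.vecMul_vecMul]
  rfl

lemma Phi_diff (n : ℕ) (p : ℕ → ℝ) (t : ℕ) (j : ℤ) :
    Phi n p t j - Phi n p t (j-1)
      = ∑ k : Fin (n+1), (if (k:ℤ) = j then chainPmf n p t k else 0) := by
  simp only [Phi, Finset.sum_filter]
  rw [← Finset.sum_sub_distrib]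
  apply Finset.sum_congr rfl
  intro k _
  split_ifs
  all_goals try (exfalso; omega)
  all_goals ring

lemma Phi_step (n : ℕ) (p : ℕ → ℝ) (t : ℕ) (i : ℤ) :
    Phi n p (t+1) i = Phi n p t i
      + phat n p i * (Phi n p t (i+1) - 2 * Phi n p t i + Phi n p t (i-1)) := by
  have h1 : Phi n p (t+1) i = ∑ k : Fin (n+1), chainPmf n p t k *
      (∑ j ∈ Finset.univ.filter (fun j : Fin (n+1) => (j:ℤ) ≤ i), bdK n p k j) := by
    simp only [Phi, chainPmf_succ]
    rw [Finset.sum_comm]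
    apply Finset.sum_congr rfl
    intro k _
    rw [Finset.mul_sum]
  rw [h1]
  have h2 : ∀ k : Fin (n+1), chainPmf n p t k *
      (∑ j ∈ Finset.univ.filter (fun j : Fin (n+1) => (j:ℤ) ≤ i), bdK n p k j)
      = chainPmf n p t k * (if (k:ℤ) ≤ i then 1 else 0)
        + phat n p i * (if (k:ℤ) = i+1 then chainPmf n p t k else 0)
        - phat n p i * (if (k:ℤ) = i then chainPmf n p t k else 0) := by
    intro k
    rw [rowPartial]
    split_ifs <;> ring
  rw [Finset.sum_congr rfl (fun k _ => h2 k), Finset.sum_sub_distrib, Finset.sum_add_distrib,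
    ← Finset.mul_sum, ← Finset.mul_sum, ← Phi_diff, ← Phi_diff]
  have h3 : ∑ k : Fin (n+1), chainPmf n p t k * (if (k:ℤ) ≤ i then 1 else 0) = Phi n p t i := by
    rw [Phi, Finset.sum_filter]
    apply Finset.sum_congr rfl
    intro k _
    split_ifs <;> ring
  rw [h3, show i+1-1 = i by ring]
  ring

lemma Phi_neg (n : ℕ) (p : ℕ → ℝ) (t : ℕ) (i : ℤ) (h : i < 0) : Phi n p t i = 0 := by
  rw [Phi, Finset.sum_filter]
  apply Finset.sum_eq_zero
  intro j _
  rw [if_neg (by omega)]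

lemma Phi_zero (n : ℕ) (p : ℕ → ℝ) (i : ℤ) :
    Phi n p 0 i = if 0 ≤ i then 1 else 0 := by
  have h0 : chainPmf n p 0 = fun j => if j = 0 then (1:ℝ) else 0 := by
    rw [chainPmf, pow_zero, Matrix.vecMul_one]
  rw [Phi, h0, Finset.sum_ite_eq' _ (0 : Fin (n+1)) (fun _ => (1:ℝ))]
  simp only [Finset.mem_filter, Finset.mem_univ, true_and]
  split_ifs
  all_goals try rfl
  all_goals simp_all [Fin.val_zero]

lemma phat_zero (n : ℕ) (p : ℕ → ℝ) (i : ℤ) (h : i < 0 ∨ (n:ℤ) ≤ i) : phat n p i = 0 := by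
  rw [phat, if_neg (by omega)]

lemma Phi_total (n : ℕ) (p : ℕ → ℝ) (t : ℕ) (i : ℤ) (h : (n:ℤ) ≤ i) : Phi n p t i = 1 := by
  induction t generalizing i with
  | zero => rw [Phi_zero, if_pos (by omega)]
  | succ t ih =>
      rw [Phi_step, phat_zero n p i (Or.inr h)]
      rw [ih i h]
      ring

lemma bdK_nonneg (n : ℕ) (p : ℕ → ℝ)
    (hnn : ∀ i, i < n → 0 ≤ p i) (hle1 : ∀ i, i < n → p i ≤ 1)
    (hsum : ∀ i, i + 1 < n → p i + p (i + 1) ≤ 1)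
    (k j : Fin (n+1)) : 0 ≤ bdK n p k j := by
  have hk := k.isLt
  have hj := j.isLt
  simp only [bdK, Matrix.of_apply]
  split_ifs with h1 h2 h3 h4 h5
  · exact hnn _ (by omega)
  · exact hnn _ (by omega)
  · linarith [hle1 (k:ℕ) (by omega : (k:ℕ) < n)]
  · have := hsum ((k:ℕ)-1) (by omega)
    rw [show (k:ℕ)-1+1 = (k:ℕ) by omega] at this
    linarith [hnn ((k:ℕ)-1) (by omega : (k:ℕ)-1 < n)]
  · norm_num
  · linarith [hle1 ((k:ℕ)-1) (by omega : (k:ℕ)-1 < n)]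
  · exact le_refl 0

lemma chainPmf_nonneg (n : ℕ) (p : ℕ → ℝ)
    (hnn : ∀ i, i < n → 0 ≤ p i) (hle1 : ∀ i, i < n → p i ≤ 1)
    (hsum : ∀ i, i + 1 < n → p i + p (i + 1) ≤ 1)
    (t : ℕ) (j : Fin (n+1)) : 0 ≤ chainPmf n p t j := by
  induction t generalizing j with
  | zero =>
      rw [chainPmf, pow_zero, Matrix.vecMul_one]
      split_ifs <;> norm_num
  | succ t ih =>
      rw [chainPmf_succ]
      apply Finset.sum_nonneg
      intro k _
      exact mul_nonneg (ih k) (bdK_nonneg n p hnn hle1 hsum k j)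

lemma Phi_nonneg (n : ℕ) (p : ℕ → ℝ)
    (hnn : ∀ i, i < n → 0 ≤ p i) (hle1 : ∀ i, i < n → p i ≤ 1)
    (hsum : ∀ i, i + 1 < n → p i + p (i + 1) ≤ 1)
    (t : ℕ) (i : ℤ) : 0 ≤ Phi n p t i := by
  apply Finset.sum_nonneg
  intro k _
  exact chainPmf_nonneg n p hnn hle1 hsum t k

lemma Phi_le_one (n : ℕ) (p : ℕ → ℝ)
    (hnn : ∀ i, i < n → 0 ≤ p i) (hle1 : ∀ i, i < n → p i ≤ 1)
    (hsum : ∀ i, i + 1 < n → p i + p (i + 1) ≤ 1)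
    (t : ℕ) (i : ℤ) : Phi n p t i ≤ 1 := by
  have h := Phi_total n p t (n:ℤ) le_rfl
  rw [← h]
  apply Finset.sum_le_sum_of_subset_of_nonneg
  · intro j hj
    simp only [Finset.mem_filter, Finset.mem_univ, true_and] at *
    omega
  · intro k _ _
    exact chainPmf_nonneg n p hnn hle1 hsum t k

lemma phat_nonneg (n : ℕ) (p : ℕ → ℝ) (hnn : ∀ i, i < n → 0 ≤ p i) (i : ℤ) :
    0 ≤ phat n p i := by
  rw [phat]
  split_ifs with h
  · exact hnn _ (by omega)
  · exact le_refl 0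

lemma phat_adj (n : ℕ) (p : ℕ → ℝ)
    (hnn : ∀ i, i < n → 0 ≤ p i) (hle1 : ∀ i, i < n → p i ≤ 1)
    (hsum : ∀ i, i + 1 < n → p i + p (i + 1) ≤ 1) (i : ℤ) :
    phat n p i + phat n p (i+1) ≤ 1 := by
  simp only [phat]
  split_ifs with h1 h2 h2
  · have := hsum i.toNat (by omega)
    rw [show i.toNat + 1 = (i+1).toNat by omega] at this
    linarith
  · linarith [hle1 i.toNat (by omega)]
  · linarith [hle1 (i+1).toNat (by omega)]
  · norm_num

lemma phat_le_one (n : ℕ) (p : ℕ → ℝ) (hle1 : ∀ i, i < n → p i ≤ 1) (i : ℤ) :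
    phat n p i ≤ 1 := by
  rw [phat]
  split_ifs with h
  · exact hle1 _ (by omega)
  · norm_num

lemma phat_uniform (n : ℕ) (i : ℤ) (h1 : 0 ≤ i) (h2 : i < (n:ℤ)) :
    phat n (fun _ => 1/2) i = 1/2 := by
  rw [phat, if_pos ⟨h1, h2⟩]

lemma uconc (n : ℕ) : ∀ t : ℕ, ∀ i : ℤ, 0 ≤ i →
    Phi n (fun _ => (1:ℝ)/2) t (i+1) - 2 * Phi n (fun _ => (1:ℝ)/2) t i
      + Phi n (fun _ => (1:ℝ)/2) t (i-1) ≤ 0 := by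
  intro t
  induction t with
  | zero =>
      intro i hi
      rw [Phi_zero, Phi_zero, Phi_zero, if_pos (by omega : (0:ℤ) ≤ i+1), if_pos hi]
      split_ifs <;> norm_num
  | succ t ih =>
      intro i hi
      have avg : ∀ j : ℤ, 0 ≤ j → j < (n:ℤ) →
          Phi n (fun _ => (1:ℝ)/2) (t+1) j
            = (Phi n (fun _ => (1:ℝ)/2) t (j-1) + Phi n (fun _ => (1:ℝ)/2) t (j+1))/2 := by
        intro j hj1 hj2
        rw [Phi_step, phat_uniform n j hj1 hj2]
        ring
      by_cases h1 : (n:ℤ) + 1 ≤ i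
      · have e : ∀ j : ℤ, (n:ℤ) ≤ j → Phi n (fun _ => (1:ℝ)/2) (t+1) j
            = Phi n (fun _ => (1:ℝ)/2) t j := by
          intro j hj
          rw [Phi_step, phat_zero _ _ _ (Or.inr hj)]
          ring
        rw [e (i+1) (by omega), e i (by omega), e (i-1) (by omega)]
        exact ih i hi
      · by_cases h2 : i = (n:ℤ)
        · have e1 : Phi n (fun _ => (1:ℝ)/2) (t+1) (i+1) = 1 := Phi_total _ _ _ _ (by omega)
          have e2 : Phi n (fun _ => (1:ℝ)/2) (t+1) i = 1 := Phi_total _ _ _ _ (by omega)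
          have e3 : Phi n (fun _ => (1:ℝ)/2) (t+1) (i-1) ≤ 1 :=
            Phi_le_one _ _ (fun _ _ => by norm_num) (fun _ _ => by norm_num)
              (fun _ _ => by norm_num) _ _
          linarith
        · -- i < n
          by_cases h3 : i = 0
          · subst h3
            by_cases h4 : (n:ℤ) = 1
            · have hn1 : n = 1 := by omega
              subst hn1
              have e1 : Phi 1 (fun _ => (1:ℝ)/2) (t+1) (0+1) = 1 := Phi_total _ _ _ _ (by omega)
              have e2 := avg 0 le_rfl (by omega)
              have e3 : Phi 1 (fun _ => (1:ℝ)/2) t (0-1) = 0 := Phi_neg _ _ _ _ (by omega)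
              have e4 : Phi 1 (fun _ => (1:ℝ)/2) t (0+1) = 1 := Phi_total _ _ _ _ (by omega)
              have e5 : Phi 1 (fun _ => (1:ℝ)/2) (t+1) (0-1) = 0 := Phi_neg _ _ _ _ (by omega)
              rw [e1, e2, e3, e4, e5]
              norm_num
            · -- n ≥ 2
              have e1 := avg (0+1) (by omega) (by omega)
              have e2 := avg 0 le_rfl (by omega)
              have e5 : Phi n (fun _ => (1:ℝ)/2) (t+1) (0-1) = 0 := Phi_neg _ _ _ _ (by omega)
              have e3 : Phi n (fun _ => (1:ℝ)/2) t (0-1) = 0 := Phi_neg _ _ _ _ (by omega)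
              have k1 := ih (0+1) (by omega)
              rw [e1, e2, e5, e3]
              linarith
          · -- 1 ≤ i ≤ n-1
            by_cases h5 : i = (n:ℤ) - 1
            · -- i = n-1 ≥ 1
              have e1 : Phi n (fun _ => (1:ℝ)/2) (t+1) (i+1) = 1 := Phi_total _ _ _ _ (by omega)
              have e2 := avg i hi (by omega)
              have e3 := avg (i-1) (by omega) (by omega)
              have e4 : Phi n (fun _ => (1:ℝ)/2) t (i+1) = 1 := Phi_total _ _ _ _ (by omega)
              have k1 := ih (i-1) (by omega)
              rw [e1, e2, e3, e4] at *
              linarith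
            · -- 1 ≤ i ≤ n-2
              have e1 := avg (i+1) (by omega) (by omega)
              have e2 := avg i hi (by omega)
              have e3 := avg (i-1) (by omega) (by omega)
              have k1 := ih (i-1) (by omega)
              have k2 := ih (i+1) (by omega)
              rw [e1, e2, e3]
              simp only [add_sub_cancel_right, sub_add_cancel] at *
              linarith

lemma udec (n : ℕ) (t : ℕ) (i : ℤ) :
    Phi n (fun _ => (1:ℝ)/2) (t+1) i ≤ Phi n (fun _ => (1:ℝ)/2) t i := by
  rw [Phi_step]
  by_cases h : 0 ≤ i
  · have h1 : 0 ≤ phat n (fun _ => (1:ℝ)/2) i := phat_nonneg _ _ (fun _ _ => by norm_num) _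
    have h2 := uconc n t i h
    nlinarith
  · rw [phat_zero _ _ _ (Or.inl (by omega))]
    ring_nf
    exact le_rfl

set_option maxHeartbeats 2000000 in
lemma main_ineq (n : ℕ) (p : ℕ → ℝ)
    (hnn : ∀ i, i < n → 0 ≤ p i) (hle1 : ∀ i, i < n → p i ≤ 1)
    (hsum : ∀ i, i + 1 < n → p i + p (i + 1) ≤ 1)
    (hp0 : p 0 ≤ 1 / 2) :
    ∀ t : ℕ, ∀ i : ℤ, Phi n (fun _ => (1:ℝ)/2) t i ≤ Phi n p t i := by
  intro t
  induction t using Nat.strong_induction_on with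
  | _ t IH =>
    rcases t with _ | t
    · intro i
      rw [Phi_zero, Phi_zero]
    · rcases t with _ | s
      · -- t = 1
        intro i
        rw [Phi_step, Phi_step]
        simp only [Phi_zero]
        by_cases h0 : i < 0
        · rw [phat_zero n p i (Or.inl h0), phat_zero n _ i (Or.inl h0)]
        · by_cases h1 : 1 ≤ i
          · rw [if_pos (by omega : (0:ℤ) ≤ i+1), if_pos (by omega : (0:ℤ) ≤ i),
              if_pos (by omega : (0:ℤ) ≤ i-1)]
            linarith
          · -- i = 0
            have hi : i = 0 := by omega
            subst hi
            rw [if_pos (by omega : (0:ℤ) ≤ 0+1), if_pos le_rfl,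
              if_neg (by omega : ¬ (0:ℤ) ≤ 0-1)]
            by_cases hn : n = 0
            · subst hn
              rw [phat_zero 0 p 0 (Or.inr (by omega)), phat_zero 0 _ 0 (Or.inr (by omega))]
            · have hu : phat n (fun _ => (1:ℝ)/2) 0 = 1/2 :=
                phat_uniform n 0 le_rfl (by omega)
              have hp : phat n p 0 = p 0 := by
                rw [phat, if_pos ⟨le_rfl, by omega⟩]
                norm_num
              rw [hu, hp]
              linarith
      · -- t = s + 2
        have ih : ∀ i : ℤ, Phi n (fun _ => (1:ℝ)/2) s i ≤ Phi n p s i :=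
          IH s (by omega)
        intro i
        by_cases hin : 0 ≤ i ∧ i < (n:ℤ)
        · obtain ⟨hi0, hiN⟩ := hin
          have hU : phat n (fun _ => (1:ℝ)/2) i = 1/2 := phat_uniform n i hi0 hiN
          by_cases hD : i = 0 ∧ n = 1
          · obtain ⟨hi, hn⟩ := hD
            subst hi
            subst hn
            have hNm : phat 1 p (0-1:ℤ) = 0 := phat_zero _ _ _ (by omega)
            have hNu : phat 1 (fun _ => (1:ℝ)/2) (0-1:ℤ) = 0 := phat_zero _ _ _ (by omega)
            have hZp : phat 1 p (0+1:ℤ) = 0 := phat_zero _ _ _ (by omega)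
            have hZu : phat 1 (fun _ => (1:ℝ)/2) (0+1:ℤ) = 0 := phat_zero _ _ _ (by omega)
            have Z1p : Phi 1 p s (0-1:ℤ) = 0 := Phi_neg _ _ _ _ (by omega)
            have Z1u : Phi 1 (fun _ => (1:ℝ)/2) s (0-1:ℤ) = 0 := Phi_neg _ _ _ _ (by omega)
            have Z2p : Phi 1 p s (0-1-1:ℤ) = 0 := Phi_neg _ _ _ _ (by omega)
            have Z2u : Phi 1 (fun _ => (1:ℝ)/2) s (0-1-1:ℤ) = 0 := Phi_neg _ _ _ _ (by omega)
            have T1p : Phi 1 p s (0+1:ℤ) = 1 := Phi_total _ _ _ _ (by omega)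
            have T1u : Phi 1 (fun _ => (1:ℝ)/2) s (0+1:ℤ) = 1 := Phi_total _ _ _ _ (by omega)
            have T2p : Phi 1 p s (0+1+1:ℤ) = 1 := Phi_total _ _ _ _ (by omega)
            have T2u : Phi 1 (fun _ => (1:ℝ)/2) s (0+1+1:ℤ) = 1 := Phi_total _ _ _ _ (by omega)
            have e : Phi 1 (fun _ => (1:ℝ)/2) (s+1) 0 = 1/2 := by
              rw [Phi_step, hU, Z1u, T1u]
              ring
            have hc : (1:ℝ)/2 ≤ Phi 1 (fun _ => (1:ℝ)/2) s 0 := by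
              linarith [udec 1 s 0]
            have hC : (1:ℝ)/2 ≤ Phi 1 p s 0 := le_trans hc (ih 0)
            simp only [Phi_step, hU, hNm, hNu, hZp, hZu, Z1p, Z1u, Z2p, Z2u, T1p, T1u, T2p, T2u]
            have P : 0 ≤ (1-2*phat 1 p 0)^2 * (Phi 1 p s 0 - 1/2) :=
              mul_nonneg (sq_nonneg _) (by linarith)
            linarith [P]
          · by_cases hB : i = 0
            · -- i = 0, n ≥ 2
              subst hB
              have hn2 : 2 ≤ n := by omega
              have hNm : phat n p (0-1:ℤ) = 0 := phat_zero _ _ _ (by omega)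
              have hNu : phat n (fun _ => (1:ℝ)/2) (0-1:ℤ) = 0 := phat_zero _ _ _ (by omega)
              have hUp : phat n (fun _ => (1:ℝ)/2) (0+1:ℤ) = 1/2 :=
                phat_uniform n _ (by omega) (by omega)
              have Z1p : Phi n p s (0-1:ℤ) = 0 := Phi_neg _ _ _ _ (by omega)
              have Z1u : Phi n (fun _ => (1:ℝ)/2) s (0-1:ℤ) = 0 := Phi_neg _ _ _ _ (by omega)
              have Z2p : Phi n p s (0-1-1:ℤ) = 0 := Phi_neg _ _ _ _ (by omega)
              have Z2u : Phi n (fun _ => (1:ℝ)/2) s (0-1-1:ℤ) = 0 := Phi_neg _ _ _ _ (by omega)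
              have w0 := uconc n s 0 (by omega)
              rw [Z1u] at w0
              have w1 := uconc n s (0+1) (by omega)
              simp only [add_sub_cancel_right] at w1
              have hq : 0 ≤ phat n p 0 := phat_nonneg n p hnn 0
              have hs : 0 ≤ phat n p (0+1) := phat_nonneg n p hnn (0+1)
              have hqs : phat n p 0 + phat n p (0+1) ≤ 1 := phat_adj n p hnn hle1 hsum 0
              have hC' := ih 0
              have hD' := ih (0+1)
              have hE' := ih (0+1+1)
              simp only [Phi_step, hU, hUp, hNm, hNu, Z1p, Z1u, Z2p, Z2u]
              have P3 : 0 ≤ ((1-2*phat n p 0)^2 + phat n p 0 * phat n p (0+1))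
                  * (Phi n p s 0 - Phi n (fun _ => (1:ℝ)/2) s 0) :=
                mul_nonneg (add_nonneg (sq_nonneg _) (mul_nonneg hq hs)) (by linarith)
              have P4 : 0 ≤ (2*phat n p 0*(1 - phat n p 0 - phat n p (0+1)))
                  * (Phi n p s (0+1) - Phi n (fun _ => (1:ℝ)/2) s (0+1)) :=
                mul_nonneg (mul_nonneg (by linarith) (by linarith)) (by linarith)
              have P5 : 0 ≤ phat n p 0 * phat n p (0+1)
                  * (Phi n p s (0+1+1) - Phi n (fun _ => (1:ℝ)/2) s (0+1+1)) :=
                mul_nonneg (mul_nonneg hq hs) (by linarith)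
              have P7 : 0 ≤ (2*phat n p 0*(1 - phat n p 0 - phat n p (0+1)))
                  * (Phi n (fun _ => (1:ℝ)/2) s (0+1)
                    - (Phi n (fun _ => (1:ℝ)/2) s 0 + Phi n (fun _ => (1:ℝ)/2) s (0+1+1))/2) :=
                mul_nonneg (mul_nonneg (by linarith) (by linarith)) (by linarith)
              have P8 : 0 ≤ ((1-2*phat n p 0)^2/4)
                  * (3*Phi n (fun _ => (1:ℝ)/2) s 0 - Phi n (fun _ => (1:ℝ)/2) s (0+1+1)) :=
                mul_nonneg (by positivity) (by linarith)
              linarith [P3, P4, P5, P7, P8]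
            · by_cases hC : i = (n:ℤ) - 1
              · -- i = n-1 ≥ 1
                have h1 : (1:ℤ) ≤ i := by omega
                have hUm : phat n (fun _ => (1:ℝ)/2) (i-1) = 1/2 :=
                  phat_uniform n _ (by omega) (by omega)
                have hZp : phat n p (i+1) = 0 := phat_zero _ _ _ (by omega)
                have hZu : phat n (fun _ => (1:ℝ)/2) (i+1) = 0 := phat_zero _ _ _ (by omega)
                have T1p : Phi n p s (i+1) = 1 := Phi_total _ _ _ _ (by omega)
                have T2p : Phi n p s (i+1+1) = 1 := Phi_total _ _ _ _ (by omega)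
                have T1u : Phi n (fun _ => (1:ℝ)/2) s (i+1) = 1 := Phi_total _ _ _ _ (by omega)
                have T2u : Phi n (fun _ => (1:ℝ)/2) s (i+1+1) = 1 := Phi_total _ _ _ _ (by omega)
                have hq : 0 ≤ phat n p i := phat_nonneg n p hnn i
                have hr : 0 ≤ phat n p (i-1) := phat_nonneg n p hnn (i-1)
                have hqr : phat n p (i-1) + phat n p i ≤ 1 := by
                  have := phat_adj n p hnn hle1 hsum (i-1)
                  simpa [sub_add_cancel] using this
                have w1 := uconc n s (i-1) (by omega)
                simp only [sub_add_cancel] at w1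
                have w2 := uconc n s i (by omega)
                rw [T1u] at w2
                have hA' := ih (i-1-1)
                have hB' := ih (i-1)
                have hC' := ih i
                simp only [Phi_step, hU, hUm, hZp, hZu, T1p, T2p, T1u, T2u,
                  add_sub_cancel_right, sub_add_cancel]
                have P1 : 0 ≤ phat n p i * phat n p (i-1)
                    * (Phi n p s (i-1-1) - Phi n (fun _ => (1:ℝ)/2) s (i-1-1)) :=
                  mul_nonneg (mul_nonneg hq hr) (by linarith)
                have P2 : 0 ≤ (2*phat n p i*(1 - phat n p i - phat n p (i-1)))
                    * (Phi n p s (i-1) - Phi n (fun _ => (1:ℝ)/2) s (i-1)) :=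
                  mul_nonneg (mul_nonneg (by linarith) (by linarith)) (by linarith)
                have P3 : 0 ≤ ((1-2*phat n p i)^2 + phat n p i * phat n p (i-1))
                    * (Phi n p s i - Phi n (fun _ => (1:ℝ)/2) s i) :=
                  mul_nonneg (add_nonneg (sq_nonneg _) (mul_nonneg hq hr)) (by linarith)
                have P6 : 0 ≤ (2*phat n p i*(1 - phat n p i - phat n p (i-1)))
                    * (Phi n (fun _ => (1:ℝ)/2) s (i-1)
                      - (Phi n (fun _ => (1:ℝ)/2) s (i-1-1) + Phi n (fun _ => (1:ℝ)/2) s i)/2) :=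
                  mul_nonneg (mul_nonneg (by linarith) (by linarith)) (by linarith)
                have P8 : 0 ≤ ((1-2*phat n p i)^2/4)
                    * (3*Phi n (fun _ => (1:ℝ)/2) s i - Phi n (fun _ => (1:ℝ)/2) s (i-1-1) - 2) :=
                  mul_nonneg (by positivity) (by linarith)
                linarith [P1, P2, P3, P6, P8]
              · -- 1 ≤ i ≤ n-2
                have h1 : (1:ℤ) ≤ i := by omega
                have h2 : i ≤ (n:ℤ) - 2 := by omega
                have hUm : phat n (fun _ => (1:ℝ)/2) (i-1) = 1/2 :=
                  phat_uniform n _ (by omega) (by omega)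
                have hUp : phat n (fun _ => (1:ℝ)/2) (i+1) = 1/2 :=
                  phat_uniform n _ (by omega) (by omega)
                have hq : 0 ≤ phat n p i := phat_nonneg n p hnn i
                have hr : 0 ≤ phat n p (i-1) := phat_nonneg n p hnn (i-1)
                have hs : 0 ≤ phat n p (i+1) := phat_nonneg n p hnn (i+1)
                have hqr : phat n p (i-1) + phat n p i ≤ 1 := by
                  have := phat_adj n p hnn hle1 hsum (i-1)
                  simpa [sub_add_cancel] using this
                have hqs : phat n p i + phat n p (i+1) ≤ 1 := phat_adj n p hnn hle1 hsum i
                have w1 := uconc n s (i-1) (by omega)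
                simp only [sub_add_cancel] at w1
                have w2 := uconc n s i (by omega)
                have w3 := uconc n s (i+1) (by omega)
                simp only [add_sub_cancel_right] at w3
                have hA' := ih (i-1-1)
                have hB' := ih (i-1)
                have hC' := ih i
                have hD' := ih (i+1)
                have hE' := ih (i+1+1)
                simp only [Phi_step, hU, hUm, hUp, add_sub_cancel_right, sub_add_cancel]
                have P1 : 0 ≤ phat n p i * phat n p (i-1)
                    * (Phi n p s (i-1-1) - Phi n (fun _ => (1:ℝ)/2) s (i-1-1)) :=
                  mul_nonneg (mul_nonneg hq hr) (by linarith)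
                have P2 : 0 ≤ (2*phat n p i*(1 - phat n p i - phat n p (i-1)))
                    * (Phi n p s (i-1) - Phi n (fun _ => (1:ℝ)/2) s (i-1)) :=
                  mul_nonneg (mul_nonneg (by linarith) (by linarith)) (by linarith)
                have P3 : 0 ≤ ((1-2*phat n p i)^2 + phat n p i * (phat n p (i-1) + phat n p (i+1)))
                    * (Phi n p s i - Phi n (fun _ => (1:ℝ)/2) s i) :=
                  mul_nonneg (add_nonneg (sq_nonneg _) (mul_nonneg hq (add_nonneg hr hs))) (by linarith)
                have P4 : 0 ≤ (2*phat n p i*(1 - phat n p i - phat n p (i+1)))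
                    * (Phi n p s (i+1) - Phi n (fun _ => (1:ℝ)/2) s (i+1)) :=
                  mul_nonneg (mul_nonneg (by linarith) (by linarith)) (by linarith)
                have P5 : 0 ≤ phat n p i * phat n p (i+1)
                    * (Phi n p s (i+1+1) - Phi n (fun _ => (1:ℝ)/2) s (i+1+1)) :=
                  mul_nonneg (mul_nonneg hq hs) (by linarith)
                have P6 : 0 ≤ (2*phat n p i*(1 - phat n p i - phat n p (i-1)))
                    * (Phi n (fun _ => (1:ℝ)/2) s (i-1)
                      - (Phi n (fun _ => (1:ℝ)/2) s (i-1-1) + Phi n (fun _ => (1:ℝ)/2) s i)/2) :=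
                  mul_nonneg (mul_nonneg (by linarith) (by linarith)) (by linarith)
                have P7 : 0 ≤ (2*phat n p i*(1 - phat n p i - phat n p (i+1)))
                    * (Phi n (fun _ => (1:ℝ)/2) s (i+1)
                      - (Phi n (fun _ => (1:ℝ)/2) s i + Phi n (fun _ => (1:ℝ)/2) s (i+1+1))/2) :=
                  mul_nonneg (mul_nonneg (by linarith) (by linarith)) (by linarith)
                have P8 : 0 ≤ ((1-2*phat n p i)^2/4)
                    * (2*Phi n (fun _ => (1:ℝ)/2) s i - Phi n (fun _ => (1:ℝ)/2) s (i-1-1)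
                      - Phi n (fun _ => (1:ℝ)/2) s (i+1+1)) :=
                  mul_nonneg (by positivity) (by linarith)
                linarith [P1, P2, P3, P4, P5, P6, P7, P8]
        · have hq : phat n p i = 0 := phat_zero _ _ _ (by omega)
          have hq' : phat n (fun _ => (1:ℝ)/2) i = 0 := phat_zero _ _ _ (by omega)
          simp only [Phi_step, hq, hq', zero_mul, add_zero]
          exact ih i

theorem stmt_13 {n : ℕ} (p : ℕ → ℝ)
    (hnn : ∀ i, i < n → 0 ≤ p i) (hle1 : ∀ i, i < n → p i ≤ 1)
    (hsum : ∀ i, i + 1 < n → p i + p (i + 1) ≤ 1)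
    (hp0 : p 0 ≤ 1 / 2) :
    ∀ t : ℕ, ∀ i : Fin (n + 1),
      ∑ j ∈ Finset.univ.filter (· ≤ i), chainPmf n (fun _ => 1 / 2) t j ≤
      ∑ j ∈ Finset.univ.filter (· ≤ i), chainPmf n p t j := by
  intro t i
  have e : ∀ q : ℕ → ℝ,
      ∑ j ∈ Finset.univ.filter (· ≤ i), chainPmf n q t j = Phi n q t ((i:ℕ):ℤ) := by
    intro q
    rw [Phi]
    apply Finset.sum_congr _ (fun _ _ => rfl)
    apply Finset.filter_congr
    intro j _
    simp only [Fin.le_def]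
    omega
  rw [e, e]
  exact main_ineq n p hnn hle1 hsum hp0 t ((i:ℕ):ℤ)
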